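/- In any communication graph G, if v and w are vertices such that w is a send vertex and there exists a directed path in G from v to w, then in every colouring sequence on G, w cannot be coloured yellow before v is coloured green. -/

import Mathlib

/-! Formal framework: communication graphs and the red/yellow/green colouring game
(Brodsky–Pedersen–Wagner, "On the Complexity of Buffer Allocation in Message Passing Systems"),
with receive-side token pools. -/

inductive Colour : Type
  | red | yellow | green
deriving DecidableEq

/-- A communication graph: vertices are partitioned into start/send/receive/end vertices,
`pred u v` means `u` is the component predecessor of `v` (a process arc `u → v`),
`matched u v` is a communication arc from send `u` to its matching receive `v`,
`comp v` is the index of the process component of `v`, and `pos v` is the position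
of `v` within its component chain. -/
structure CommGraph (V : Type) where
  isStart : V → Prop
  isSend : V → Prop
  isRecv : V → Prop
  isEnd : V → Prop
  pred : V → V → Prop
  matched : V → V → Prop
  comp : V → ℕ
  pos : V → ℕ

namespace CommGraph

variable {V : Type}

/-- An arc of the communication graph (process arc or communication arc). -/
def GArc (G : CommGraph V) (u v : V) : Prop := G.pred u v ∨ G.matched u v

/-- Well-formedness of a communication graph: the vertex kinds partition `V`,
components are chains (unique predecessors, positions increase along process arcs),
communication arcs go from sends to receives in different components and form a
partial matching, and the graph is acyclic (arcs admit no infinite descent). -/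
structure WF (G : CommGraph V) : Prop where
  kinds : ∀ v, G.isStart v ∨ G.isSend v ∨ G.isRecv v ∨ G.isEnd v
  start_not_send : ∀ v, G.isStart v → ¬ G.isSend v
  start_not_recv : ∀ v, G.isStart v → ¬ G.isRecv v
  start_not_end : ∀ v, G.isStart v → ¬ G.isEnd v
  send_not_recv : ∀ v, G.isSend v → ¬ G.isRecv v
  send_not_end : ∀ v, G.isSend v → ¬ G.isEnd v
  recv_not_end : ∀ v, G.isRecv v → ¬ G.isEnd v
  pred_unique : ∀ {u u' v}, G.pred u v → G.pred u' v → u = u'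
  pred_comp : ∀ {u v}, G.pred u v → G.comp u = G.comp v
  pred_pos : ∀ {u v}, G.pred u v → G.pos v = G.pos u + 1
  start_no_pred : ∀ {u v}, G.pred u v → ¬ G.isStart v
  has_pred : ∀ v, ¬ G.isStart v → ∃ u, G.pred u v
  matched_send : ∀ {u v}, G.matched u v → G.isSend u
  matched_recv : ∀ {u v}, G.matched u v → G.isRecv v
  matched_comp : ∀ {u v}, G.matched u v → G.comp u ≠ G.comp v
  matched_unique_left : ∀ {u u' v}, G.matched u v → G.matched u' v → u = u'
  matched_unique_right : ∀ {u v v'}, G.matched u v → G.matched u v' → v = v'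
  send_has_match : ∀ v, G.isSend v → ∃ w, G.matched v w
  recv_has_match : ∀ v, G.isRecv v → ∃ w, G.matched w v
  dag : WellFounded fun u v => G.GArc u v

end CommGraph

/-- A state of the colouring game: the colouring, which receive vertices currently
hold a token on their incident communication arc, and the number of available
tokens in each (per-process, receive-side) pool. -/
structure St (V : Type) where
  col : V → Colour
  tok : V → Bool
  pool : ℕ → ℕ

/-- The names of the colouring rules. -/
inductive Rule : Type
  | sendYel | recvYel | recvYelTok | sendGrn | recvGrn | endYel | endGrn
deriving DecidableEq

variable {V : Type}

/-- One move of the colouring game (receive-side buffering: the token used by the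
buffered-receive rule `recvYelTok` comes from the pool of the receiving component,
and is returned when the receive turns green). -/
inductive Step [DecidableEq V] (G : CommGraph V) : Rule → St V → St V → Prop
  | sendYel {s : St V} {v u : V} :
      G.isSend v → s.col v = .red → G.pred u v → s.col u = .green →
      Step G .sendYel s ⟨Function.update s.col v .yellow, s.tok, s.pool⟩
  | recvYel {s : St V} {v u w : V} :
      G.isRecv v → s.col v = .red → G.matched w v → s.col w = .yellow →
      G.pred u v → s.col u = .green →
      Step G .recvYel s ⟨Function.update s.col v .yellow, s.tok, s.pool⟩
  | recvYelTok {s : St V} {v w : V} :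
      G.isRecv v → s.col v = .red → G.matched w v → s.col w = .yellow →
      0 < s.pool (G.comp v) →
      Step G .recvYelTok s ⟨Function.update s.col v .yellow,
        Function.update s.tok v true,
        Function.update s.pool (G.comp v) (s.pool (G.comp v) - 1)⟩
  | sendGrn {s : St V} {v r : V} :
      G.isSend v → s.col v = .yellow → G.matched v r → s.col r = .yellow →
      Step G .sendGrn s ⟨Function.update s.col v .green, s.tok, s.pool⟩
  | recvGrn {s : St V} {v u w : V} :
      G.isRecv v → s.col v = .yellow → G.pred u v → s.col u = .green →
      G.matched w v → s.col w = .green →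
      Step G .recvGrn s ⟨Function.update s.col v .green,
        Function.update s.tok v false,
        if s.tok v then
          Function.update s.pool (G.comp v) (s.pool (G.comp v) + 1)
        else s.pool⟩
  | endYel {s : St V} {v u : V} :
      G.isEnd v → s.col v = .red → G.pred u v → s.col u = .green →
      Step G .endYel s ⟨Function.update s.col v .yellow, s.tok, s.pool⟩
  | endGrn {s : St V} {v : V} :
      G.isEnd v → s.col v = .yellow →
      Step G .endGrn s ⟨Function.update s.col v .green, s.tok, s.pool⟩

/-- `IsSeq G s l` : the list `l` of (rule, state) pairs is a valid colouring sequence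
starting from state `s`. -/
def IsSeq [DecidableEq V] (G : CommGraph V) : St V → List (Rule × St V) → Prop
  | _, [] => True
  | s, p :: l => Step G p.1 s p.2 ∧ IsSeq G p.2 l

/-- The list of states visited by a colouring sequence. -/
def states (s0 : St V) (l : List (Rule × St V)) : List (St V) :=
  s0 :: l.map Prod.snd

/-- The final state of a colouring sequence. -/
def finalSt (s0 : St V) (l : List (Rule × St V)) : St V :=
  (states s0 l).getLast (by simp [states])

open Classical in
/-- The initial state: start vertices green, all others red, no tokens placed,
token pools given by the token assignment `B` (pool of component `i` holds `B i`). -/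
noncomputable def init (G : CommGraph V) (B : ℕ → ℕ) : St V :=
  ⟨fun v => if G.isStart v then Colour.green else Colour.red, fun _ => false, B⟩

/-- A state from which no colouring rule applies. -/
def MaximalFrom [DecidableEq V] (G : CommGraph V) (s : St V) : Prop :=
  ∀ ρ t, ¬ Step G ρ s t

/-- A state is complete when every vertex is green. -/
def Completes (s : St V) : Prop := ∀ v, s.col v = Colour.green

/-- A deadlocking colouring sequence from `s0`: a maximal sequence whose final
colouring has a non-green vertex. -/
def Deadlocks [DecidableEq V] (G : CommGraph V) (s0 : St V) (l : List (Rule × St V)) : Prop :=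
  IsSeq G s0 l ∧ MaximalFrom G (finalSt s0 l) ∧ ¬ Completes (finalSt s0 l)

/-- The system is safe (deadlock free) under token assignment `B`:
every maximal colouring sequence completes. -/
def DeadlockFree [DecidableEq V] (G : CommGraph V) (B : ℕ → ℕ) : Prop :=
  ∀ l, IsSeq G (init G B) l → MaximalFrom G (finalSt (init G B) l) →
    Completes (finalSt (init G B) l)

/-- A state blocks: some yellow send has a matching red receive to which the
buffered-receive rule cannot be applied (no token available). -/
def Blocked (G : CommGraph V) (s : St V) : Prop :=
  ∃ v r, G.matched v r ∧ s.col v = Colour.yellow ∧ s.col r = Colour.red ∧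
    s.pool (G.comp r) = 0

/-- The graph is block free under token assignment `B`: no colouring sequence blocks. -/
def BlockFree [DecidableEq V] (G : CommGraph V) (B : ℕ → ℕ) : Prop :=
  ∀ l, IsSeq G (init G B) l → ¬ Blocked G (finalSt (init G B) l)

/-! A green vertex only ever has green predecessors, and a send is activated only after its
component predecessor is green. Both facts are invariant under every colouring rule, so along any
path into an active send `w` all vertices, in particular `v`, are green. -/

/-- Receives are exempt from `pred_green`: a token lets a receive turn yellow before its component
predecessor is green. -/
structure CommGraph.Consistent (G : CommGraph V) (col : V → Colour) : Prop where
  green_of_arc : ∀ {x u}, G.GArc x u → col u = .green → col x = .green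
  pred_green : ∀ {x u}, G.pred x u → ¬ G.isRecv u → col u ≠ .red → col x = .green

namespace CommGraph.Consistent

variable {G : CommGraph V} {col : V → Colour}

theorem arc_green_of_not_recv (hwf : G.WF) (hcol : G.Consistent col) {x u : V}
    (harc : G.GArc x u) (hu : ¬ G.isRecv u) (hred : col u ≠ .red) : col x = .green :=
  harc.elim (fun hp => hcol.pred_green hp hu hred) (fun hm => absurd (hwf.matched_recv hm) hu)

theorem green_of_reflTransGen (hcol : G.Consistent col) {a b : V}
    (hab : Relation.ReflTransGen G.GArc a b) (hb : col b = .green) : col a = .green := by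
  induction hab using Relation.ReflTransGen.head_induction_on with
  | refl => exact hb
  | head hac _ ih => exact hcol.green_of_arc hac ih

theorem update [DecidableEq V] (hcol : G.Consistent col) {v : V} {c : Colour}
    (hv : col v ≠ .green)
    (hgreen : c = .green → ∀ x, G.GArc x v → col x = .green)
    (hpred : ¬ G.isRecv v → ∀ x, G.pred x v → col x = .green) :
    G.Consistent (Function.update col v c) := by
  have keep_green : ∀ {x}, col x = .green → Function.update col v c x = .green := fun hx => by
    rw [Function.update_of_ne (by rintro rfl; exact hv hx), hx]
  constructor
  · intro x u harc hu
    by_cases huv : u = v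
    · subst huv
      exact keep_green (hgreen (by simpa using hu) x harc)
    · rw [Function.update_of_ne huv] at hu
      exact keep_green (hcol.green_of_arc harc hu)
  · intro x u hxu hu hred
    by_cases huv : u = v
    · subst huv
      exact keep_green (hpred hu x hxu)
    · rw [Function.update_of_ne huv] at hred
      exact keep_green (hcol.pred_green hxu hu hred)

theorem step [DecidableEq V] (hwf : G.WF) {ρ : Rule} {s t : St V} (hst : Step G ρ s t)
    (hcol : G.Consistent s.col) : G.Consistent t.col := by
  cases hst with
  | sendYel _ hc hp hu =>
    exact hcol.update (by simp [hc]) nofun fun _ x hx => hwf.pred_unique hx hp ▸ hu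
  | recvYel hv hc =>
    exact hcol.update (by simp [hc]) nofun fun hnr => absurd hv hnr
  | recvYelTok hv hc =>
    exact hcol.update (by simp [hc]) nofun fun hnr => absurd hv hnr
  | sendGrn hv hc =>
    have hnr : ¬ G.isRecv _ := hwf.send_not_recv _ hv
    exact hcol.update (by simp [hc])
      (fun _ _ harc => hcol.arc_green_of_not_recv hwf harc hnr (by simp [hc]))
      (fun _ _ hx => hcol.pred_green hx hnr (by simp [hc]))
  | recvGrn hv hc hp hu hm hw =>
    refine hcol.update (by simp [hc]) (fun _ x harc => ?_) fun hnr => absurd hv hnr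
    rcases harc with hx | hx
    · exact hwf.pred_unique hx hp ▸ hu
    · exact hwf.matched_unique_left hx hm ▸ hw
  | endYel _ hc hp hu =>
    exact hcol.update (by simp [hc]) nofun fun _ x hx => hwf.pred_unique hx hp ▸ hu
  | endGrn hv hc =>
    have hnr : ¬ G.isRecv _ := fun hr => hwf.recv_not_end _ hr hv
    exact hcol.update (by simp [hc])
      (fun _ _ harc => hcol.arc_green_of_not_recv hwf harc hnr (by simp [hc]))
      (fun _ _ hx => hcol.pred_green hx hnr (by simp [hc]))

end CommGraph.Consistent

theorem CommGraph.consistent_init (G : CommGraph V) (hwf : G.WF) (B : ℕ → ℕ) :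
    G.Consistent (init G B).col where
  green_of_arc {_ u} harc hu := by
    have hstart : G.isStart u := by by_contra h; simp [init, h] at hu
    rcases harc with hp | hm
    · exact absurd hstart (hwf.start_no_pred hp)
    · exact absurd (hwf.matched_recv hm) (hwf.start_not_recv u hstart)
  pred_green {_ u} hp _ hu := by
    have hstart : G.isStart u := by by_contra h; simp [init, h] at hu
    exact absurd hstart (hwf.start_no_pred hp)

theorem IsSeq.forall_mem_states [DecidableEq V] {G : CommGraph V} (P : St V → Prop)
    (hP : ∀ {ρ s t}, Step G ρ s t → P s → P t) :
    ∀ {s₀ : St V} {l : List (Rule × St V)}, IsSeq G s₀ l → P s₀ → ∀ s ∈ states s₀ l, P s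
  | _, [], _, h₀, s, hs => by simp_all [states]
  | _, p :: l, ⟨hstep, hrest⟩, h₀, s, hs => by
    rcases List.mem_cons.mp hs with rfl | hs
    · exact h₀
    · exact IsSeq.forall_mem_states P hP hrest (hP hstep h₀) s hs

theorem send_waits_for_ancestors_general {V : Type} [DecidableEq V]
    (G : CommGraph V) (hwf : G.WF) (B : ℕ → ℕ) (v w : V)
    (hsend : G.isSend w) (hpath : Relation.TransGen G.GArc v w)
    (l : List (Rule × St V)) (hseq : IsSeq G (init G B) l) :
    ∀ s ∈ states (init G B) l, s.col w ≠ Colour.red → s.col v = Colour.green := by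
  intro s hs hw
  have hcol : G.Consistent s.col :=
    IsSeq.forall_mem_states (fun s => G.Consistent s.col)
      (fun hst => CommGraph.Consistent.step hwf hst) hseq (G.consistent_init hwf B) s hs
  obtain ⟨u, hvu, huw⟩ := Relation.TransGen.tail'_iff.mp hpath
  exact hcol.green_of_reflTransGen hvu
    (hcol.arc_green_of_not_recv hwf huw (hwf.send_not_recv w hsend) hw)

/-- **Lemma.** In any communication graph `G`, if `w` is a send vertex and there is
a directed path in `G` from `v` to `w`, then in every colouring sequence on `G`,
`w` cannot be coloured yellow before `v` is coloured green: at every state of the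
sequence, if `w` is not red then `v` is green. -/
theorem send_waits_for_ancestors {V : Type} [DecidableEq V] [Fintype V]
    (G : CommGraph V) (hwf : G.WF) (B : ℕ → ℕ) (v w : V)
    (hsend : G.isSend w) (hpath : Relation.TransGen G.GArc v w)
    (l : List (Rule × St V)) (hseq : IsSeq G (init G B) l) :
    ∀ s ∈ states (init G B) l, s.col w ≠ Colour.red → s.col v = Colour.green :=
  send_waits_for_ancestors_general G hwf B v w hsend hpath l hseq
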